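/- arXiv:math/9810104 — 6 statements merged into one kernel-verified Lean document; each statement's English description precedes it below -/
import Mathlib

section
/- For every complex number z, the inequality |(1 - z) * exp(z)| ≤ exp(|z|^2 / 2) holds. -/
theorem weierstrass_factor_bound (z : ℂ) :
    ‖(1 - z) * Complex.exp z‖ ≤ Real.exp (‖z‖ ^ 2 / 2) := by
  rw [norm_mul, Complex.norm_exp]
  set a := ‖1 - z‖ with ha_def
  have ha : 0 ≤ a := norm_nonneg _
  have hsq : a ^ 2 = 1 - 2 * z.re + ‖z‖ ^ 2 := by
    rw [ha_def, Complex.sq_norm, Complex.sq_norm, Complex.normSq_apply,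
      Complex.normSq_apply, Complex.sub_re, Complex.sub_im]
    simp
    ring
  have h1 : a ≤ Real.exp ((a ^ 2 - 1) / 2) := by
    have h2 : a ^ 2 ≤ Real.exp (a ^ 2 - 1) := by
      have := Real.add_one_le_exp (a ^ 2 - 1)
      linarith
    calc a = Real.sqrt (a ^ 2) := (Real.sqrt_sq ha).symm
      _ ≤ Real.sqrt (Real.exp (a ^ 2 - 1)) := Real.sqrt_le_sqrt h2
      _ = Real.exp ((a ^ 2 - 1) / 2) := by
          rw [Real.exp_half]
  calc a * Real.exp z.re ≤ Real.exp ((a ^ 2 - 1) / 2) * Real.exp z.re :=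
        mul_le_mul_of_nonneg_right h1 (Real.exp_pos _).le
    _ = Real.exp ((a ^ 2 - 1) / 2 + z.re) := (Real.exp_add _ _).symm
    _ = Real.exp (‖z‖ ^ 2 / 2) := by rw [hsq]; ring_nf
end

section
/- Let α, β, ρ, Δ be real numbers with α ≠ 0, 0 < ρ < |α|, 0 < Δ ≤ ρ/2, and |α - β| ≤ Δ. Then for every real x with |x - α| ≥ ρ one has |(1 - x/α) / (1 - x/β)| ≤ 1 + 4Δ/ρ. -/
theorem perturbed_linear_factor_bound (α β ρ Δ : ℝ)
    (hα : α ≠ 0) (hρ : 0 < ρ) (hρα : ρ < |α|) (hΔ : 0 < Δ) (hΔρ : Δ ≤ ρ / 2)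
    (hαβ : |α - β| ≤ Δ) :
    ∀ x : ℝ, ρ ≤ |x - α| → |(1 - x / α) / (1 - x / β)| ≤ 1 + 4 * Δ / ρ := by
  intro x hx
  have hβabs : ρ / 2 < |β| := by
    have := abs_sub_abs_le_abs_sub α β
    linarith
  have hβ : β ≠ 0 := by
    intro h; rw [h, abs_zero] at hβabs; linarith
  have hbx : ρ / 2 ≤ |β - x| := by
    have h1 : |x - α| - |α - β| ≤ |β - x| := by
      have := abs_sub_abs_le_abs_sub (x - α) (x - β)
      have h2 : |β - x| = |x - β| := abs_sub_comm _ _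
      have h3 : (x - α) - (x - β) = β - α := by ring
      have h4 : |β - α| = |α - β| := abs_sub_comm _ _
      rw [h3, h4] at this
      linarith [this, abs_sub_comm β x ▸ le_refl |β - x|, h2 ▸ this]
    linarith
  have hbx0 : β - x ≠ 0 := by
    intro h; rw [h, abs_zero] at hbx; linarith
  have heq : (1 - x / α) / (1 - x / β) = ((α - x) * β) / ((β - x) * α) := by
    have h1 : 1 - x / α = (α - x) / α := by field_simp
    have h2 : 1 - x / β = (β - x) / β := by field_simp
    rw [h1, h2, div_div_div_comm]
    rw [div_div_div_eq]
  rw [heq, abs_div, abs_mul, abs_mul]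
  have hax : |α - x| ≤ |β - x| + Δ := by
    have := abs_sub_abs_le_abs_sub (α - x) (β - x)
    have h3 : (α - x) - (β - x) = α - β := by ring
    rw [h3] at this
    linarith
  have hβle : |β| ≤ |α| + Δ := by
    have := abs_sub_abs_le_abs_sub β α
    have h4 : |β - α| = |α - β| := abs_sub_comm _ _
    rw [h4] at this
    linarith
  have hden : 0 < |β - x| * |α| := by positivity
  rw [div_le_iff₀ hden]
  have hA : ρ < |α| := hρα
  have hb : ρ / 2 ≤ |β - x| := hbx
  have h1 : |α - x| * |β| ≤ (|β - x| + Δ) * (|α| + Δ) := by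
    apply mul_le_mul hax hβle (abs_nonneg _)
    positivity
  have key : (|β - x| + Δ) * (|α| + Δ) ≤ (1 + 4 * Δ / ρ) * (|β - x| * |α|) := by
    rw [show (1 + 4 * Δ / ρ) = (ρ + 4 * Δ) / ρ by field_simp]
    rw [div_mul_eq_mul_div, le_div_iff₀ hρ]
    have h2b : (0:ℝ) ≤ 2 * |β - x| - ρ := by linarith
    have hAρ : (0:ℝ) ≤ |α| - ρ := by linarith
    nlinarith [mul_nonneg hΔ.le (mul_nonneg h2b hAρ),
      mul_nonneg (mul_nonneg hρ.le hΔ.le)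
        (by linarith : (0:ℝ) ≤ 3 * |β - x| + |α| - 2 * ρ - Δ)]
  linarith
end

section
/- Let μ be a positive Borel measure on ℝ with finite moments of all orders and unbounded support, let 1 ≤ p < ∞, and suppose there exists an upper semicontinuous function w : ℝ → [0,1] with sup_x |x|^n·w(x) < ∞ for all n ≥ 0, a finite positive Borel measure ν on ℝ, and a representation μ(A) = ∫_A w(x)^p dν(x) for all Borel sets A, such that moreover 1/w ∈ L_p(μ) and every compactly supported continuous function f can be approximated by polynomials in the seminorm sup_x w(x)|f(x) - P(x)|. Then the polynomials are dense in L_p(ℝ, dμ). -/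
open MeasureTheory

theorem polynomials_dense_of_representation (μ ν : Measure ℝ) (p : ℝ)
    (hp : 1 ≤ p)
    (hmom : ∀ n : ℕ, Integrable (fun x : ℝ => |x| ^ n) μ)
    (hsupp : ¬ Bornology.IsBounded (Function.support fun x : ℝ =>
      (μ (Set.Ioo (x - 1) (x + 1))).toReal))
    (w : ℝ → ℝ) (hw01 : ∀ x, w x ∈ Set.Icc (0 : ℝ) 1)
    (husc : UpperSemicontinuous w)
    (hwmom : ∀ n : ℕ, ∃ C : ℝ, ∀ x : ℝ, |x| ^ n * w x ≤ C)
    (hν : IsFiniteMeasure ν)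
    (hrep : ∀ A : Set ℝ, MeasurableSet A →
      μ A = ENNReal.ofReal (∫ x in A, (w x) ^ p ∂ν))
    (hinv : MemLp (fun x => 1 / w x) (ENNReal.ofReal p) μ)
    (happrox : ∀ f : ℝ → ℝ, Continuous f → HasCompactSupport f →
      ∀ ε > (0 : ℝ), ∃ P : Polynomial ℝ, ∀ x : ℝ, w x * |f x - P.eval x| ≤ ε) :
    ∀ f : ℝ → ℝ, MemLp f (ENNReal.ofReal p) μ →
      ∀ ε > (0 : ℝ), ∃ P : Polynomial ℝ,
        eLpNorm (fun x => f x - P.eval x) (ENNReal.ofReal p) μ < ENNReal.ofReal ε := by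
  intro f hf ε hε
  have hp0 : (0 : ℝ) < p := lt_of_lt_of_le one_pos hp
  set p' : ENNReal := ENNReal.ofReal p with hp'def
  have hp'0 : p' ≠ 0 := (ENNReal.ofReal_pos.mpr hp0).ne'
  have hp'top : p' ≠ ⊤ := ENNReal.ofReal_ne_top
  have hp'toReal : p'.toReal = p := ENNReal.toReal_ofReal hp0.le
  -- μ is a finite measure
  haveI : IsFiniteMeasure μ := by
    have h0 := hmom 0
    simp only [pow_zero] at h0
    rcases (integrable_const_iff).mp h0 with h | h
    · exact absurd h one_ne_zero
    · exact h
  have hwmeas : Measurable w := husc.measurable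
  -- μ = ν.withDensity (ofReal (w ^ p))
  have hμeq : μ = ν.withDensity (fun x => ENNReal.ofReal (w x ^ p)) := by
    ext A hA
    rw [hrep A hA, withDensity_apply _ hA]
    rw [ofReal_integral_eq_lintegral_ofReal]
    · refine Integrable.mono' (integrable_const (1 : ℝ)) ?_ ?_
      · exact ((hwmeas.pow_const _).aestronglyMeasurable).restrict
      · filter_upwards with x
        rw [Real.norm_eq_abs, abs_of_nonneg (Real.rpow_nonneg (hw01 x).1 p)]
        exact Real.rpow_le_one (hw01 x).1 (hw01 x).2 hp0.le
    · filter_upwards with x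
      exact Real.rpow_nonneg (hw01 x).1 p
  -- step 1: approximate by compactly supported continuous g
  have hε2 : (0:ℝ) < ε / 2 := by linarith
  obtain ⟨g, hgsupp, hgclose, hgcont, hgmem⟩ :=
    hf.exists_hasCompactSupport_eLpNorm_sub_le hp'top
      (ε := ENNReal.ofReal (ε / 2)) (by simpa using (ENNReal.ofReal_pos.mpr hε2).ne')
  -- step 2: approximate g by a polynomial
  set K : ℝ := ((ν Set.univ) ^ (1/p)).toReal with hKdef
  have hK0 : 0 ≤ K := ENNReal.toReal_nonneg
  have hνfin : (ν Set.univ) ^ (1/p) ≠ ⊤ :=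
    ENNReal.rpow_ne_top_of_nonneg (by positivity) (measure_ne_top ν _)
  set δ : ℝ := (ε / 2) / (K + 1) with hδdef
  have hδ0 : 0 < δ := by positivity
  obtain ⟨P, hP⟩ := happrox g hgcont hgsupp δ hδ0
  refine ⟨P, ?_⟩
  -- bound eLpNorm (g - P) p μ
  have hgP : eLpNorm (fun x => g x - P.eval x) p' μ ≤
      ENNReal.ofReal δ * (ν Set.univ) ^ (1/p) := by
    rw [eLpNorm_eq_lintegral_rpow_enorm_toReal hp'0 hp'top, hp'toReal, hμeq]
    have hmeas : Measurable fun x => ‖g x - P.eval x‖ₑ ^ p :=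
      ((hgcont.sub (Polynomial.continuous P)).measurable.enorm).pow_const _
    rw [lintegral_withDensity_eq_lintegral_mul ν ((hwmeas.pow_const p).ennreal_ofReal) hmeas]
    have hbound : ∀ x, (fun x => ENNReal.ofReal (w x ^ p)) x
        * (fun x => ‖g x - P.eval x‖ₑ ^ p) x ≤ ENNReal.ofReal (δ ^ p) := by
      intro x
      dsimp only
      have h1 : ‖g x - P.eval x‖ₑ = ENNReal.ofReal |g x - P.eval x| :=
        Real.enorm_eq_ofReal_abs _
      rw [h1, ENNReal.ofReal_rpow_of_nonneg (abs_nonneg _) hp0.le,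
        ← ENNReal.ofReal_mul (Real.rpow_nonneg (hw01 x).1 p),
        ← Real.mul_rpow (hw01 x).1 (abs_nonneg _)]
      exact ENNReal.ofReal_le_ofReal
        (Real.rpow_le_rpow (mul_nonneg (hw01 x).1 (abs_nonneg _)) (hP x) hp0.le)
    calc (∫⁻ x, ((fun x => ENNReal.ofReal (w x ^ p)) * fun x => ‖g x - P.eval x‖ₑ ^ p) x ∂ν)
          ^ (1 / p)
        ≤ (∫⁻ _, ENNReal.ofReal (δ ^ p) ∂ν) ^ (1 / p) := by
          refine ENNReal.rpow_le_rpow (lintegral_mono fun x => hbound x) (by positivity)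
      _ = (ENNReal.ofReal (δ ^ p) * ν Set.univ) ^ (1 / p) := by rw [lintegral_const]
      _ = ENNReal.ofReal δ * (ν Set.univ) ^ (1 / p) := by
          rw [← ENNReal.ofReal_rpow_of_nonneg hδ0.le hp0.le,
            ENNReal.mul_rpow_of_nonneg _ _ (by positivity : (0:ℝ) ≤ 1/p),
            ← ENNReal.rpow_mul, mul_one_div_cancel hp0.ne', ENNReal.rpow_one]
  have hgP2 : eLpNorm (fun x => g x - P.eval x) p' μ < ENNReal.ofReal (ε / 2) := by
    refine lt_of_le_of_lt hgP ?_
    have : (ν Set.univ) ^ (1/p) = ENNReal.ofReal K := by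
      rw [hKdef, ENNReal.ofReal_toReal hνfin]
    rw [this, ← ENNReal.ofReal_mul hδ0.le]
    rw [ENNReal.ofReal_lt_ofReal_iff hε2]
    have hKK : δ * (K + 1) = ε / 2 := by
      rw [hδdef]; exact div_mul_cancel₀ _ (by positivity)
    nlinarith
  -- combine
  have heq : (fun x => f x - P.eval x)
      = (f - g) + fun x => g x - P.eval x := by
    funext x; simp only [Pi.add_apply, Pi.sub_apply]; ring
  rw [heq]
  calc eLpNorm ((f - g) + fun x => g x - P.eval x) p' μ
      ≤ eLpNorm (f - g) p' μ + eLpNorm (fun x => g x - P.eval x) p' μ := by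
        refine eLpNorm_add_le (hf.1.sub hgmem.1) ?_ (ENNReal.one_le_ofReal.mpr hp)
        exact (hgcont.sub (Polynomial.continuous P)).aestronglyMeasurable
    _ < ENNReal.ofReal (ε / 2) + ENNReal.ofReal (ε / 2) :=
        ENNReal.add_lt_add_of_le_of_lt (ne_top_of_le_ne_top ENNReal.ofReal_ne_top hgclose)
          hgclose hgP2
    _ = ENNReal.ofReal ε := by
        rw [← ENNReal.ofReal_add hε2.le hε2.le]; ring_nf
end

section
/- Let μ be a positive Borel measure on ℝ and α : ℝ → [0, +∞] a lower semicontinuous function with μ({x : α(x) < ∞}) > 0. Then there exists a lower semicontinuous function β : ℝ → [0, +∞] such that: (a) β(x) ≥ α(x) for all x; (b) μ({x : β(x) ≠ α(x)}) = 0; and (c) for every ε > 0 and every x with β(x) < ∞, the set {y ∈ ℝ : |x - y| + |β(x) - β(y)| < ε} has positive μ-measure. -/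
open MeasureTheory ENNReal Set

namespace LscMod

variable (μ : Measure ℝ) (α : ℝ → ℝ≥0∞)

/-- Real epigraph of α. -/
def T : Set (ℝ × ℝ) := {p | 0 ≤ p.2 ∧ α p.1 ≤ ENNReal.ofReal p.2}

/-- Graph map. -/
noncomputable def g : ℝ → ℝ × ℝ := fun x => (x, (α x).toReal)

/-- Finiteness domain. -/
def G : Set ℝ := {x | α x ≠ ⊤}

/-- Rational balls in the plane. -/
def D (d : ℚ × ℚ × ℚ) : Set (ℝ × ℝ) := Metric.ball ((d.1 : ℝ), (d.2.1 : ℝ)) (d.2.2 : ℝ)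

/-- Null balls. -/
def Nul : Set (ℚ × ℚ × ℚ) := {d | μ (G α ∩ g α ⁻¹' D d) = 0}

def U : Set (ℝ × ℝ) := ⋃ d ∈ Nul μ α, D d

def E : Set (ℝ × ℝ) := T α \ U μ α

def Fib (x : ℝ) : Set ℝ := {t | (x, t) ∈ E μ α}

noncomputable def β (x : ℝ) : ℝ≥0∞ := ⨅ t ∈ Fib μ α x, ENNReal.ofReal t

variable {μ α}

lemma isClosed_T (hα : LowerSemicontinuous α) : IsClosed (T α) := by
  have h1 : IsClosed {p : ℝ × ℝ | 0 ≤ p.2} := isClosed_le continuous_const continuous_snd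
  have h2 : IsOpen {p : ℝ × ℝ | ENNReal.ofReal p.2 < α p.1} := by
    have : {p : ℝ × ℝ | ENNReal.ofReal p.2 < α p.1}
        = ⋃ c : ℝ≥0∞, (α ⁻¹' Set.Ioi c) ×ˢ (ENNReal.ofReal ⁻¹' Set.Iio c) := by
      ext p
      simp only [Set.mem_setOf_eq, Set.mem_iUnion, Set.mem_prod, Set.mem_preimage,
        Set.mem_Ioi, Set.mem_Iio]
      constructor
      · intro h
        obtain ⟨c, hc1, hc2⟩ := exists_between h
        exact ⟨c, hc2, hc1⟩
      · rintro ⟨c, h1, h2⟩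
        exact lt_trans h2 h1
    rw [this]
    exact isOpen_iUnion fun c =>
      ((lowerSemicontinuous_iff_isOpen_preimage.1 hα c).prod
        (isOpen_Iio.preimage ENNReal.continuous_ofReal))
  have : T α = {p : ℝ × ℝ | 0 ≤ p.2} ∩ {p : ℝ × ℝ | ENNReal.ofReal p.2 < α p.1}ᶜ := by
    ext p
    simp [T, not_lt]
  rw [this]
  exact h1.inter h2.isClosed_compl

lemma isOpen_U : IsOpen (U μ α) :=
  isOpen_biUnion fun _ _ => Metric.isOpen_ball

lemma isClosed_E (hα : LowerSemicontinuous α) : IsClosed (E μ α) :=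
  (isClosed_T hα).sdiff isOpen_U

lemma fib_nonneg {x t : ℝ} (ht : t ∈ Fib μ α x) : 0 ≤ t := ht.1.1

lemma alpha_le_beta (x : ℝ) : α x ≤ β μ α x :=
  le_iInf₂ fun _ ht => ht.1.2

lemma beta_le {x t : ℝ} (ht : t ∈ Fib μ α x) : β μ α x ≤ ENNReal.ofReal t :=
  iInf₂_le t ht

lemma beta_top {x : ℝ} (h : ¬ (Fib μ α x).Nonempty) : β μ α x = ⊤ := by
  rw [Set.not_nonempty_iff_eq_empty] at h
  simp [β, h]

lemma fib_min (hα : LowerSemicontinuous α) {x : ℝ} (h : (Fib μ α x).Nonempty) :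
    ∃ t₀ ∈ Fib μ α x, (∀ t ∈ Fib μ α x, t₀ ≤ t) ∧ β μ α x = ENNReal.ofReal t₀ := by
  have hcl : IsClosed (Fib μ α x) := (isClosed_E hα).preimage (Continuous.prodMk_right x)
  have hbd : BddBelow (Fib μ α x) := ⟨0, fun t ht => fib_nonneg ht⟩
  refine ⟨sInf (Fib μ α x), hcl.csInf_mem h hbd, fun t ht => csInf_le hbd ht, ?_⟩
  refine le_antisymm (beta_le (hcl.csInf_mem h hbd)) (le_iInf₂ fun t ht => ?_)
  exact ENNReal.ofReal_le_ofReal (csInf_le hbd ht)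

lemma beta_eq_alpha {x : ℝ} (hx : α x ≠ ⊤) (hg : g α x ∉ U μ α) : β μ α x = α x := by
  have hmem : ((α x).toReal : ℝ) ∈ Fib μ α x := by
    refine ⟨⟨ENNReal.toReal_nonneg, ?_⟩, hg⟩
    rw [ENNReal.ofReal_toReal hx]
  refine le_antisymm ?_ (alpha_le_beta x)
  calc β μ α x ≤ ENNReal.ofReal (α x).toReal := beta_le hmem
  _ = α x := ENNReal.ofReal_toReal hx

lemma measure_bad : μ (G α ∩ g α ⁻¹' U μ α) = 0 := by
  have : G α ∩ g α ⁻¹' U μ α = ⋃ d ∈ Nul μ α, (G α ∩ g α ⁻¹' D d) := by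
    simp only [U, Set.preimage_iUnion₂, Set.inter_iUnion₂]
  rw [this, measure_biUnion_null_iff (Set.to_countable _)]
  exact fun d hd => hd

lemma beta_ne_top {x : ℝ} (hx : α x ≠ ⊤) (hg : g α x ∉ U μ α) : β μ α x ≠ ⊤ := by
  rw [beta_eq_alpha hx hg]; exact hx

lemma lsc_beta (hα : LowerSemicontinuous α) : LowerSemicontinuous (β μ α) := by
  intro x c hc
  by_contra h
  rw [Filter.not_eventually] at h
  have hcx : c ≠ ⊤ := hc.ne_top
  -- extract a sequence
  have hseq : ∀ n : ℕ, ∃ y : ℝ, |y - x| < 1 / (n + 1) ∧ β μ α y ≤ c := by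
    intro n
    have hb : Metric.ball x (1 / (n + 1)) ∈ nhds x :=
      Metric.ball_mem_nhds x (by positivity)
    obtain ⟨y, hy1, hy2⟩ := Filter.frequently_iff.1 h hb
    exact ⟨y, by simpa [Real.dist_eq] using hy1, not_lt.1 hy2⟩
  choose y hy1 hy2 using hseq
  have hyx : Filter.Tendsto y Filter.atTop (nhds x) := by
    rw [tendsto_iff_dist_tendsto_zero]
    refine squeeze_zero (fun n => dist_nonneg) (fun n => ?_)
      tendsto_one_div_add_atTop_nhds_zero_nat
    rw [Real.dist_eq]
    exact (hy1 n).le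
  -- fibers nonempty, minima
  have hne : ∀ n, (Fib μ α (y n)).Nonempty := by
    intro n
    by_contra hn
    have h2 := hy2 n
    rw [beta_top hn] at h2
    exact hcx (top_le_iff.1 h2)
  have hmin := fun n => fib_min hα (hne n)
  choose t ht hmint hbt using hmin
  have htc : ∀ n, t n ∈ Set.Icc 0 c.toReal := by
    intro n
    refine ⟨fib_nonneg (ht n), ?_⟩
    have := hy2 n
    rw [hbt n] at this
    exact (ENNReal.ofReal_le_iff_le_toReal hcx).1 this
  obtain ⟨s, hs, φ, hφ, hts⟩ := tendsto_subseq_of_bounded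
    (Bornology.IsBounded.subset (Metric.isBounded_Icc 0 c.toReal) (fun _ h => h)) htc
  have hsl : s ∈ Set.Icc 0 c.toReal := by rwa [closure_Icc] at hs
  have hEmem : (x, s) ∈ E μ α := by
    refine (isClosed_E hα).mem_of_tendsto
      ((hyx.comp hφ.tendsto_atTop).prodMk_nhds hts) ?_
    exact Filter.Eventually.of_forall fun n => ht (φ n)
  have hsf : s ∈ Fib μ α x := hEmem
  have : β μ α x ≤ c := by
    calc β μ α x ≤ ENNReal.ofReal s := beta_le hsf
    _ ≤ ENNReal.ofReal c.toReal := ENNReal.ofReal_le_ofReal hsl.2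
    _ = c := ENNReal.ofReal_toReal hcx
  exact absurd hc this.not_gt

end LscMod

open LscMod

theorem lsc_modification (μ : Measure ℝ) (α : ℝ → ℝ≥0∞)
    (hα : LowerSemicontinuous α)
    (hdom : 0 < μ {x | α x < ⊤}) :
    ∃ β : ℝ → ℝ≥0∞, LowerSemicontinuous β ∧
      (∀ x, α x ≤ β x) ∧
      μ {x | β x ≠ α x} = 0 ∧
      ∀ ε > (0 : ℝ), ∀ x : ℝ, β x < ⊤ →
        0 < μ {y | β y ≠ ⊤ ∧ |x - y| + |(β x).toReal - (β y).toReal| < ε} := by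
  refine ⟨β μ α, lsc_beta hα, alpha_le_beta, ?_, ?_⟩
  · -- a.e. equality
    refine measure_mono_null ?_ (measure_bad (μ := μ) (α := α))
    intro x hx
    simp only [Set.mem_setOf_eq] at hx
    by_cases hxt : α x = ⊤
    · exact absurd (le_antisymm le_top (hxt ▸ alpha_le_beta x)) (hxt ▸ hx)
    · refine ⟨hxt, ?_⟩
      by_contra hg
      exact hx (beta_eq_alpha hxt hg)
  · intro ε hε x hβx
    -- fiber nonempty with minimum t₀
    have hne : (Fib μ α x).Nonempty := by
      by_contra hn
      exact hβx.ne (beta_top hn)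
    obtain ⟨t₀, ht₀, hmin, hbeq⟩ := fib_min hα hne
    have ht₀0 : (0:ℝ) ≤ t₀ := fib_nonneg ht₀
    have htoReal : (β μ α x).toReal = t₀ := by
      rw [hbeq, ENNReal.toReal_ofReal ht₀0]
    -- choose rational ball
    obtain ⟨r, hr0, hr4⟩ := exists_rat_btwn (show (0:ℝ) < ε / 4 by linarith)
    have hr0' : (0:ℝ) < r := hr0
    obtain ⟨p, hp⟩ := exists_rat_near x (half_pos hr0')
    obtain ⟨q, hq⟩ := exists_rat_near t₀ (half_pos hr0')
    set d : ℚ × ℚ × ℚ := (p, q, r) with hd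
    have hmemD : (x, t₀) ∈ D d := by
      simp only [D, hd, Metric.mem_ball, Prod.dist_eq, max_lt_iff, Real.dist_eq]
      constructor
      · linarith [hp]
      · linarith [hq]
    -- d is not null
    have hnotnull : d ∉ Nul μ α := by
      intro hdn
      exact ht₀.2 (Set.mem_biUnion hdn hmemD)
    have hpos : 0 < μ (G α ∩ g α ⁻¹' D d) := pos_iff_ne_zero.2 hnotnull
    -- inclusion
    have hincl : G α ∩ g α ⁻¹' D d ⊆
        {y | β μ α y ≠ ⊤ ∧ |x - y| + |(β μ α x).toReal - (β μ α y).toReal| < ε}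
        ∪ (G α ∩ g α ⁻¹' U μ α) := by
      rintro z ⟨hzG, hzD⟩
      by_cases hzU : g α z ∈ U μ α
      · exact Or.inr ⟨hzG, hzU⟩
      · refine Or.inl ⟨beta_ne_top hzG hzU, ?_⟩
        have hβz : (β μ α z).toReal = (α z).toReal := by rw [beta_eq_alpha hzG hzU]
        rw [htoReal, hβz]
        -- g α z ∈ D d : dist (z, (α z).toReal) (p,q) < r
        simp only [D, hd, Set.mem_preimage, Metric.mem_ball, Prod.dist_eq, max_lt_iff,
          Real.dist_eq, g] at hzD
        obtain ⟨h1, h2⟩ := hzD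
        have e1 : |x - z| < 2 * r := by
          have h3 := abs_sub_le x ((p:ℚ):ℝ) z
          rw [abs_sub_comm ((p:ℚ):ℝ) z] at h3
          linarith
        have e2 : |t₀ - (α z).toReal| < 2 * r := by
          have h3 := abs_sub_le t₀ ((q:ℚ):ℝ) (α z).toReal
          rw [abs_sub_comm ((q:ℚ):ℝ) (α z).toReal] at h3
          linarith
        linarith
    -- conclude
    by_contra hS
    push_neg at hS
    have hS0 : μ {y | β μ α y ≠ ⊤ ∧ |x - y| + |(β μ α x).toReal - (β μ α y).toReal| < ε} = 0 :=
      le_antisymm hS zero_le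
    have : μ (G α ∩ g α ⁻¹' D d) = 0 :=
      measure_mono_null hincl
        (by
          refine le_antisymm ?_ zero_le
          calc μ (_ ∪ _) ≤ μ _ + μ _ := measure_union_le _ _
          _ = 0 := by rw [hS0, measure_bad]; simp)
    exact hpos.ne' this
end

section
/- Let (X, p) be a real seminormed space and K ⊆ X a convex cone (λ·K ⊆ K for all λ ≥ 0) that is normal, i.e. p(x) ≤ p(x + y) for all x, y ∈ K. Let X* be the space of p-continuous linear functionals on X and K* := {L ∈ X* : L(x) ≥ 0 for all x ∈ K}. Then every L ∈ X* can be written as L = L₁ - L₂ with L₁, L₂ ∈ K*. -/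
theorem krein_decomposition_seminormed
    (X : Type*) [AddCommGroup X] [Module ℝ X]
    (p : Seminorm ℝ X) (K : Set X)
    (hconv : Convex ℝ K)
    (hcone : ∀ c : ℝ, 0 ≤ c → ∀ x ∈ K, c • x ∈ K)
    (hnormal : ∀ x ∈ K, ∀ y ∈ K, p x ≤ p (x + y))
    (L : X →ₗ[ℝ] ℝ) (hL : ∃ C : ℝ, ∀ x : X, |L x| ≤ C * p x) :
    ∃ L₁ L₂ : X →ₗ[ℝ] ℝ,
      (∃ C₁ : ℝ, ∀ x : X, |L₁ x| ≤ C₁ * p x) ∧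
      (∃ C₂ : ℝ, ∀ x : X, |L₂ x| ≤ C₂ * p x) ∧
      (∀ x ∈ K, 0 ≤ L₁ x) ∧ (∀ x ∈ K, 0 ≤ L₂ x) ∧
      L = L₁ - L₂ := by
  rcases K.eq_empty_or_nonempty with hK | ⟨x₀, hx₀⟩
  · refine ⟨L, 0, hL, ⟨0, by simp⟩, ?_, ?_, by simp⟩ <;>
      · intro x hx; rw [hK] at hx; exact absurd hx (Set.notMem_empty x)
  obtain ⟨C₀, hC₀⟩ := hL
  set C : ℝ := max C₀ 0 with hCdef
  have hC : ∀ x, |L x| ≤ C * p x := fun x =>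
    (hC₀ x).trans (mul_le_mul_of_nonneg_right (le_max_left _ _) (apply_nonneg p x))
  have hCnn : 0 ≤ C := le_max_right _ _
  have h0K : (0 : X) ∈ K := by
    have := hcone 0 le_rfl x₀ hx₀; simpa using this
  set S : X → Set ℝ := fun x =>
    {r | ∃ k₁ ∈ K, ∃ k₂ ∈ K, r = C * p (x + k₁ + k₂) - L k₁} with hSdef
  have hmem : ∀ x, ∀ k₁ ∈ K, ∀ k₂ ∈ K, C * p (x + k₁ + k₂) - L k₁ ∈ S x :=
    fun x k₁ h₁ k₂ h₂ => ⟨k₁, h₁, k₂, h₂, rfl⟩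
  have hne : ∀ x, (S x).Nonempty := fun x => ⟨_, hmem x 0 h0K 0 h0K⟩
  have hlb : ∀ x, ∀ r ∈ S x, -(C * p x) ≤ r := by
    rintro x r ⟨k₁, h₁, k₂, h₂, rfl⟩
    have h1 : L k₁ ≤ C * p k₁ := (le_abs_self _).trans (hC k₁)
    have h2 : p k₁ ≤ p (k₁ + k₂) := hnormal k₁ h₁ k₂ h₂
    have h3 : p (k₁ + k₂) ≤ p x + p (x + k₁ + k₂) := by
      have h4 : p (k₁ + k₂) ≤ p (x + k₁ + k₂) + p (-x) := by
        have := map_add_le_add p (x + k₁ + k₂) (-x)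
        refine le_trans (le_of_eq ?_) this
        congr 1
        abel
      rw [map_neg_eq_map] at h4
      linarith
    nlinarith [apply_nonneg p (x + k₁ + k₂), apply_nonneg p x, apply_nonneg p k₁]
  have hbdd : ∀ x, BddBelow (S x) := fun x => ⟨_, hlb x⟩
  set q : X → ℝ := fun x => sInf (S x) with hqdef
  have hql : ∀ x, -(C * p x) ≤ q x := fun x => le_csInf (hne x) (hlb x)
  have hqu : ∀ x, q x ≤ C * p x := by
    intro x
    have := csInf_le (hbdd x) (hmem x 0 h0K 0 h0K)
    simpa using this
  -- subadditivity
  have hadd : ∀ x y, q (x + y) ≤ q x + q y := by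
    intro x y
    refine le_of_forall_pos_le_add fun ε hε => ?_
    obtain ⟨a, ha, hal⟩ := exists_lt_of_csInf_lt (hne x)
      (lt_add_of_pos_right (q x) (half_pos hε))
    obtain ⟨b, hb, hbl⟩ := exists_lt_of_csInf_lt (hne y)
      (lt_add_of_pos_right (q y) (half_pos hε))
    obtain ⟨k₁, h₁, k₂, h₂, rfl⟩ := ha
    obtain ⟨m₁, hm₁, m₂, hm₂, rfl⟩ := hb
    have hmemxy : C * p (x + y + (k₁ + m₁) + (k₂ + m₂)) - L (k₁ + m₁) ∈ S (x + y) := by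
      refine hmem _ _ ?_ _ ?_
      · have hmid := hconv h₁ hm₁ (by norm_num : (0:ℝ) ≤ 1/2) (by norm_num : (0:ℝ) ≤ 1/2)
          (by norm_num)
        have h2 := hcone 2 (by norm_num) _ hmid
        have : (2:ℝ) • ((1/2 : ℝ) • k₁ + (1/2 : ℝ) • m₁) = k₁ + m₁ := by
          rw [smul_add, smul_smul, smul_smul]; norm_num
        rwa [this] at h2
      · have hmid := hconv h₂ hm₂ (by norm_num : (0:ℝ) ≤ 1/2) (by norm_num : (0:ℝ) ≤ 1/2)
          (by norm_num)
        have h2 := hcone 2 (by norm_num) _ hmid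
        have : (2:ℝ) • ((1/2 : ℝ) • k₂ + (1/2 : ℝ) • m₂) = k₂ + m₂ := by
          rw [smul_add, smul_smul, smul_smul]; norm_num
        rwa [this] at h2
    have hle := csInf_le (hbdd (x + y)) hmemxy
    have htri : p (x + y + (k₁ + m₁) + (k₂ + m₂)) ≤ p (x + k₁ + k₂) + p (y + m₁ + m₂) := by
      have := map_add_le_add p (x + k₁ + k₂) (y + m₁ + m₂)
      refine le_trans (le_of_eq ?_) this
      congr 1
      abel
    have : q (x + y) ≤ C * (p (x + k₁ + k₂) + p (y + m₁ + m₂)) - L (k₁ + m₁) := by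
      refine hle.trans ?_
      have := mul_le_mul_of_nonneg_left htri hCnn
      linarith
    rw [L.map_add] at this
    linarith [add_self_div_two ε]
  -- positive homogeneity, one direction suffices by symmetry trick
  have hsmul_le : ∀ c : ℝ, 0 < c → ∀ x, q (c • x) ≤ c * q x := by
    intro c hc x
    have key : ∀ r ∈ S x, q (c • x) ≤ c * r := by
      rintro r ⟨k₁, h₁, k₂, h₂, rfl⟩
      have hmem' : C * p (c • x + c • k₁ + c • k₂) - L (c • k₁) ∈ S (c • x) :=
        hmem _ _ (hcone c hc.le _ h₁) _ (hcone c hc.le _ h₂)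
      have hle := csInf_le (hbdd (c • x)) hmem'
      have : p (c • x + c • k₁ + c • k₂) = c * p (x + k₁ + k₂) := by
        rw [← smul_add, ← smul_add, map_smul_eq_mul, Real.norm_eq_abs, abs_of_pos hc]
      rw [this, map_smul] at hle
      simp only [smul_eq_mul] at hle
      calc q (c • x) ≤ C * (c * p (x + k₁ + k₂)) - c * L k₁ := hle
        _ = c * (C * p (x + k₁ + k₂) - L k₁) := by ring
    have : q (c • x) / c ≤ q x := le_csInf (hne x) fun r hr => by
      rw [div_le_iff₀ hc]
      have := key r hr
      linarith [mul_comm r c]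
    calc q (c • x) = c * (q (c • x) / c) := by field_simp
      _ ≤ c * q x := mul_le_mul_of_nonneg_left this hc.le
  have hsmul : ∀ c : ℝ, 0 < c → ∀ x, q (c • x) = c * q x := by
    intro c hc x
    refine le_antisymm (hsmul_le c hc x) ?_
    have := hsmul_le c⁻¹ (by positivity) (c • x)
    rw [smul_smul, inv_mul_cancel₀ hc.ne', one_smul] at this
    calc c * q x ≤ c * (c⁻¹ * q (c • x)) := mul_le_mul_of_nonneg_left this hc.le
      _ = q (c • x) := by field_simp
  -- Hahn-Banach extension of the zero functional on the trivial subspace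
  have hq0 : (0:ℝ) ≤ q 0 := by simpa using hql 0
  obtain ⟨g, -, hg⟩ := exists_extension_of_le_sublinear ((0 : X →ₗ[ℝ] ℝ).toPMap ⊥) q
    hsmul hadd (by
      rintro ⟨x, hx⟩
      have hx0 : x = 0 := by simpa using hx
      subst hx0
      simpa using hq0)
  have hgK : ∀ k ∈ K, L k ≤ g k ∧ 0 ≤ g k := by
    intro k hk
    have h1 : q (-k) ≤ -L k := by
      have := csInf_le (hbdd (-k)) (hmem (-k) k hk 0 h0K)
      simpa using this
    have h2 : q (-k) ≤ 0 := by
      have := csInf_le (hbdd (-k)) (hmem (-k) 0 h0K k hk)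
      simpa using this
    have hgk : g (-k) ≤ q (-k) := hg (-k)
    rw [map_neg] at hgk
    constructor <;> linarith
  have hgbound : ∀ x, |g x| ≤ C * p x := by
    intro x
    rw [abs_le]
    refine ⟨?_, (hg x).trans (hqu x)⟩
    have h5 := (hg (-x)).trans (hqu (-x))
    rw [map_neg, map_neg_eq_map] at h5
    linarith
  refine ⟨g, g - L, ⟨C, hgbound⟩, ⟨C + C, fun x => ?_⟩, fun k hk => (hgK k hk).2,
    fun k hk => by simpa using sub_nonneg.2 (hgK k hk).1, by abel⟩
  have h1 := hgbound x
  have h2 := hC x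
  simp only [LinearMap.sub_apply]
  calc |g x - L x| ≤ |g x| + |L x| := abs_sub _ _
    _ ≤ C * p x + C * p x := by linarith
    _ = (C + C) * p x := by ring
end

section
/- Let w : ℝ → [0,1] and let h := M_w be its upper Baire function with S_h := {x : h(x) > 0}. Define B⁰_w as the set of functions f : S_h → ℝ such that (i) f is continuous on each set {x : h(x) ≥ δ} for δ ∈ (0,1], (ii) h(x)·f(x) → 0 as h(x) → 0, and (iii) h(x)·f(x) → 0 as |x| → ∞ with x ∈ S_h, equipped with the norm ‖f‖_h := sup_{x ∈ S_h} h(x)·|f(x)|. Then ‖f‖_h is finite for every f ∈ B⁰_w, and B⁰_w is a complete normed space. -/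
theorem associated_banach_space_complete
    (w : ℝ → ℝ) (hw : ∀ x, w x ∈ Set.Icc (0 : ℝ) 1)
    (h : ℝ → ℝ)
    (hh : ∀ x : ℝ, Filter.Tendsto (fun δ : ℝ => sSup (w '' Set.Ioo (x - δ) (x + δ)))
      (nhdsWithin 0 (Set.Ioi 0)) (nhds (h x)))
    (S : Set ℝ) (hS : S = {x | 0 < h x})
    (B : Set (ℝ → ℝ))
    (hB : B = {f : ℝ → ℝ |
      (∀ δ ∈ Set.Ioc (0 : ℝ) 1, ContinuousOn f {x | δ ≤ h x}) ∧
      (∀ ε > (0 : ℝ), ∃ δ > (0 : ℝ), ∀ x, 0 < h x → h x < δ → h x * |f x| < ε) ∧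
      (∀ ε > (0 : ℝ), ∃ R : ℝ, ∀ x ∈ S, R ≤ |x| → h x * |f x| < ε)})
    (normf : (ℝ → ℝ) → ℝ)
    (hnorm : ∀ f : ℝ → ℝ, normf f = sSup ((fun x => h x * |f x|) '' S)) :
    (∀ f ∈ B, BddAbove ((fun x => h x * |f x|) '' S)) ∧
      ∀ F : ℕ → ℝ → ℝ, (∀ n, F n ∈ B) →
        (∀ ε > (0 : ℝ), ∃ N : ℕ, ∀ m ≥ N, ∀ n ≥ N,
          normf (fun x => F m x - F n x) < ε) →
        ∃ g ∈ B, Filter.Tendsto (fun n => normf (fun x => F n x - g x))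
          Filter.atTop (nhds 0) := by
  subst hS hB
  -- notation
  set φ : ℝ → ℝ → ℝ := fun x δ => sSup (w '' Set.Ioo (x - δ) (x + δ)) with hφdef
  -- basic facts about w images
  have hbddw : ∀ s : Set ℝ, BddAbove (w '' s) := by
    intro s
    refine ⟨1, ?_⟩
    rintro y ⟨x, -, rfl⟩
    exact (hw x).2
  have hne : ∀ (x δ : ℝ), 0 < δ → (w '' Set.Ioo (x - δ) (x + δ)).Nonempty := by
    intro x δ hδ
    exact ⟨w x, Set.mem_image_of_mem _ (by constructor <;> linarith)⟩
  have hφmono : ∀ x : ℝ, ∀ δ₁ δ₂ : ℝ, 0 < δ₁ → δ₁ ≤ δ₂ → φ x δ₁ ≤ φ x δ₂ := by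
    intro x δ₁ δ₂ h1 h12
    exact csSup_le_csSup (hbddw _) (hne x δ₁ h1)
      (Set.image_mono (Set.Ioo_subset_Ioo (by linarith) (by linarith)))
  have hle : ∀ x t : ℝ, 0 < t → h x ≤ φ x t := by
    intro x t ht
    refine le_of_tendsto (hh x) ?_
    filter_upwards [Ioo_mem_nhdsGT_of_mem (Set.mem_Ico.mpr ⟨le_refl 0, ht⟩)] with δ hδ
    exact hφmono x δ t hδ.1 hδ.2.le
  have hge0 : ∀ x, 0 ≤ h x := by
    intro x
    refine ge_of_tendsto (hh x) ?_
    filter_upwards [self_mem_nhdsWithin] with δ hδ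
    have hδ0 : (0 : ℝ) < δ := hδ
    exact (hw x).1.trans (le_csSup (hbddw _)
      (Set.mem_image_of_mem _ (by constructor <;> linarith)))
  have hle1 : ∀ x, h x ≤ 1 := by
    intro x
    refine (hle x 1 one_pos).trans ?_
    refine csSup_le (hne x 1 one_pos) ?_
    rintro y ⟨z, -, rfl⟩
    exact (hw z).2
  -- upper semicontinuity: the superlevel sets are closed
  have hclosed : ∀ c : ℝ, IsClosed {x | c ≤ h x} := by
    intro c
    have : {x | c ≤ h x} = {x | h x < c}ᶜ := by
      ext x; simp [not_lt]
    rw [this]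
    refine IsOpen.isClosed_compl ?_
    rw [Metric.isOpen_iff]
    intro x hx
    have hxc : h x < c := hx
    have hev : ∀ᶠ δ in nhdsWithin 0 (Set.Ioi 0), φ x δ < c :=
      (hh x).eventually_lt_const hxc
    obtain ⟨δ, hδc, hδ0⟩ := (hev.and self_mem_nhdsWithin).exists
    have hδ0 : (0 : ℝ) < δ := hδ0
    refine ⟨δ / 2, by linarith, ?_⟩
    intro y hy
    rw [Metric.mem_ball, Real.dist_eq] at hy
    have hy' := abs_lt.mp hy
    have h1 : h y ≤ φ y (δ / 2) := hle y (δ / 2) (by linarith)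
    have h2 : φ y (δ / 2) ≤ φ x δ := by
      refine csSup_le_csSup (hbddw _) (hne y (δ / 2) (by linarith)) ?_
      exact Set.image_mono (Set.Ioo_subset_Ioo (by linarith) (by linarith))
    exact lt_of_le_of_lt (h1.trans h2) hδc
  -- boundedness of the norm for members of B
  have hbdd : ∀ f : ℝ → ℝ,
      (∀ δ ∈ Set.Ioc (0 : ℝ) 1, ContinuousOn f {x | δ ≤ h x}) →
      (∀ ε > (0 : ℝ), ∃ δ > (0 : ℝ), ∀ x, 0 < h x → h x < δ → h x * |f x| < ε) →
      (∀ ε > (0 : ℝ), ∃ R : ℝ, ∀ x ∈ {x | 0 < h x}, R ≤ |x| → h x * |f x| < ε) →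
      BddAbove ((fun x => h x * |f x|) '' {x | 0 < h x}) := by
    intro f hf1 hf2 hf3
    obtain ⟨δ₀, hδ₀, hfsmall⟩ := hf2 1 one_pos
    obtain ⟨R, hR⟩ := hf3 1 one_pos
    set δ : ℝ := min δ₀ 1 with hδdef
    have hδ : 0 < δ := lt_min hδ₀ one_pos
    set R' : ℝ := max R 0 with hR'def
    set K : Set ℝ := {x | δ ≤ h x} ∩ Set.Icc (-R') R' with hKdef
    have hK : IsCompact K := (isCompact_Icc).inter_left (hclosed δ)
    have hfc : ContinuousOn f K :=
      (hf1 δ ⟨hδ, min_le_right _ _⟩).mono Set.inter_subset_left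
    obtain ⟨C, hC⟩ := hK.exists_bound_of_continuousOn hfc
    refine ⟨max 1 C, ?_⟩
    rintro y ⟨x, hx, rfl⟩
    simp only [Set.mem_setOf_eq] at hx
    by_cases hxδ : h x < δ
    · exact (hfsmall x hx (lt_of_lt_of_le hxδ (min_le_left _ _))).le.trans (le_max_left _ _)
    · push_neg at hxδ
      by_cases hxR : R ≤ |x|
      · exact (hR x hx hxR).le.trans (le_max_left _ _)
      · push_neg at hxR
        have hxK : x ∈ K := by
          refine ⟨hxδ, ?_⟩
          have h1 : |x| ≤ R' := le_of_lt (lt_of_lt_of_le hxR (le_max_left _ _))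
          exact ⟨neg_le_of_abs_le h1, le_of_abs_le h1⟩
        have : h x * |f x| ≤ |f x| := mul_le_of_le_one_left (abs_nonneg _) (hle1 x)
        refine this.trans (le_trans ?_ (le_max_right _ _))
        have := hC x hxK
        rwa [Real.norm_eq_abs] at this
  constructor
  · rintro f ⟨hf1, hf2, hf3⟩
    exact hbdd f hf1 hf2 hf3
  -- completeness
  intro F hF hCauchy
  -- differences are in B, so norms dominate pointwise values
  have hsubB : ∀ m n : ℕ,
      BddAbove ((fun x => h x * |F m x - F n x|) '' {x | 0 < h x}) := by
    intro m n
    obtain ⟨hm1, hm2, hm3⟩ := hF m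
    obtain ⟨hn1, hn2, hn3⟩ := hF n
    refine hbdd (fun x => F m x - F n x) ?_ ?_ ?_
    · intro δ hδ
      exact (hm1 δ hδ).sub (hn1 δ hδ)
    · intro ε hε
      obtain ⟨δ₁, hδ₁, hs₁⟩ := hm2 (ε / 2) (by linarith)
      obtain ⟨δ₂, hδ₂, hs₂⟩ := hn2 (ε / 2) (by linarith)
      refine ⟨min δ₁ δ₂, lt_min hδ₁ hδ₂, ?_⟩
      intro x hx hxδ
      have h1 := hs₁ x hx (lt_of_lt_of_le hxδ (min_le_left _ _))
      have h2 := hs₂ x hx (lt_of_lt_of_le hxδ (min_le_right _ _))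
      calc h x * |F m x - F n x| ≤ h x * (|F m x| + |F n x|) := by
            exact mul_le_mul_of_nonneg_left (abs_sub _ _) (hge0 x)
        _ = h x * |F m x| + h x * |F n x| := by ring
        _ < ε := by linarith
    · intro ε hε
      obtain ⟨R₁, hR₁⟩ := hm3 (ε / 2) (by linarith)
      obtain ⟨R₂, hR₂⟩ := hn3 (ε / 2) (by linarith)
      refine ⟨max R₁ R₂, ?_⟩
      intro x hx hxR
      have h1 := hR₁ x hx (le_trans (le_max_left _ _) hxR)
      have h2 := hR₂ x hx (le_trans (le_max_right _ _) hxR)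
      calc h x * |F m x - F n x| ≤ h x * (|F m x| + |F n x|) := by
            exact mul_le_mul_of_nonneg_left (abs_sub _ _) (hge0 x)
        _ = h x * |F m x| + h x * |F n x| := by ring
        _ < ε := by linarith
  have helem : ∀ m n : ℕ, ∀ x : ℝ, 0 < h x →
      h x * |F m x - F n x| ≤ normf (fun y => F m y - F n y) := by
    intro m n x hx
    rw [hnorm]
    exact le_csSup (hsubB m n) (Set.mem_image_of_mem _ hx)
  -- pointwise limit exists
  have hP : ∀ x : ℝ, 0 < h x → ∃ L : ℝ, Filter.Tendsto (fun n => F n x) Filter.atTop (nhds L) := by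
    intro x hx
    refine cauchySeq_tendsto_of_complete ?_
    rw [Metric.cauchySeq_iff]
    intro ε hε
    obtain ⟨N, hN⟩ := hCauchy (ε * h x) (mul_pos hε hx)
    refine ⟨N, fun m hm n hn => ?_⟩
    have h1 := (helem m n x hx).trans_lt (hN m hm n hn)
    rw [Real.dist_eq]
    have h2 : |F m x - F n x| * h x < ε * h x := by rw [mul_comm] at h1; exact h1
    exact lt_of_mul_lt_mul_right h2 hx.le
  classical
  set g : ℝ → ℝ := fun x => if hx : 0 < h x then (hP x hx).choose else 0 with hgdef
  have hg : ∀ x : ℝ, (hx : 0 < h x) →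
      Filter.Tendsto (fun n => F n x) Filter.atTop (nhds (g x)) := by
    intro x hx
    simp only [hgdef, dif_pos hx]
    exact (hP x hx).choose_spec
  -- key uniform estimate
  have hKey : ∀ ε > (0 : ℝ), ∃ N : ℕ, ∀ n ≥ N, ∀ x : ℝ, 0 < h x →
      h x * |F n x - g x| ≤ ε := by
    intro ε hε
    obtain ⟨N, hN⟩ := hCauchy ε hε
    refine ⟨N, fun n hn x hx => ?_⟩
    have hlim : Filter.Tendsto (fun m => h x * |F n x - F m x|) Filter.atTop
        (nhds (h x * |F n x - g x|)) :=
      ((tendsto_const_nhds.sub (hg x hx)).abs).const_mul (h x)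
    refine le_of_tendsto hlim ?_
    filter_upwards [Filter.eventually_ge_atTop N] with m hm
    exact (helem n m x hx).trans (hN n hn m hm).le
  -- g is in B
  have hgB : (∀ δ ∈ Set.Ioc (0 : ℝ) 1, ContinuousOn g {x | δ ≤ h x}) ∧
      (∀ ε > (0 : ℝ), ∃ δ > (0 : ℝ), ∀ x, 0 < h x → h x < δ → h x * |g x| < ε) ∧
      (∀ ε > (0 : ℝ), ∃ R : ℝ, ∀ x ∈ {x | 0 < h x}, R ≤ |x| → h x * |g x| < ε) := by
    refine ⟨?_, ?_, ?_⟩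
    · intro δ hδ
      have hunif : TendstoUniformlyOn (fun n x => F n x) g Filter.atTop {x | δ ≤ h x} := by
        rw [Metric.tendstoUniformlyOn_iff]
        intro ε hε
        obtain ⟨N, hN⟩ := hKey (ε * δ / 2) (by have := hδ.1; positivity)
        filter_upwards [Filter.eventually_ge_atTop N] with n hn x hx
        have hx : δ ≤ h x := hx
        have hx0 : 0 < h x := lt_of_lt_of_le hδ.1 hx
        have h1 : δ * |F n x - g x| ≤ ε * δ / 2 := by
          refine le_trans ?_ (hN n hn x hx0)
          exact mul_le_mul_of_nonneg_right hx (abs_nonneg _)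
        have h2 : |F n x - g x| ≤ ε / 2 := by
          rw [← mul_le_mul_iff_right₀ hδ.1]
          calc δ * |F n x - g x| ≤ ε * δ / 2 := h1
            _ = δ * (ε / 2) := by ring
        rw [Real.dist_eq, abs_sub_comm]
        linarith
      exact hunif.continuousOn (Filter.Eventually.of_forall fun n => (hF n).1 δ hδ).frequently
    · intro ε hε
      obtain ⟨N, hN⟩ := hKey (ε / 4) (by linarith)
      obtain ⟨δ, hδ, hsmall⟩ := (hF N).2.1 (ε / 2) (by linarith)
      refine ⟨δ, hδ, fun x hx hxδ => ?_⟩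
      have h1 := hN N le_rfl x hx
      have h2 := hsmall x hx hxδ
      have htri : |g x| ≤ |F N x - g x| + |F N x| := by
        have : g x = -(F N x - g x) + F N x := by ring
        calc |g x| = |(-(F N x - g x)) + F N x| := by rw [← this]
          _ ≤ |(-(F N x - g x))| + |F N x| := abs_add_le _ _
          _ = |F N x - g x| + |F N x| := by rw [abs_neg]
      calc h x * |g x| ≤ h x * (|F N x - g x| + |F N x|) :=
            mul_le_mul_of_nonneg_left htri (hge0 x)
        _ = h x * |F N x - g x| + h x * |F N x| := by ring
        _ < ε := by linarith
    · intro ε hε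
      obtain ⟨N, hN⟩ := hKey (ε / 4) (by linarith)
      obtain ⟨R, hR⟩ := (hF N).2.2 (ε / 2) (by linarith)
      refine ⟨R, fun x hx hxR => ?_⟩
      have hx0 : 0 < h x := hx
      have h1 := hN N le_rfl x hx0
      have h2 := hR x hx hxR
      have htri : |g x| ≤ |F N x - g x| + |F N x| := by
        have : g x = -(F N x - g x) + F N x := by ring
        calc |g x| = |(-(F N x - g x)) + F N x| := by rw [← this]
          _ ≤ |(-(F N x - g x))| + |F N x| := abs_add_le _ _
          _ = |F N x - g x| + |F N x| := by rw [abs_neg]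
      calc h x * |g x| ≤ h x * (|F N x - g x| + |F N x|) :=
            mul_le_mul_of_nonneg_left htri (hge0 x)
        _ = h x * |F N x - g x| + h x * |F N x| := by ring
        _ < ε := by linarith
  -- the convergence in norm
  refine ⟨g, hgB, ?_⟩
  rw [Metric.tendsto_atTop]
  intro ε hε
  obtain ⟨N, hN⟩ := hKey (ε / 2) (by linarith)
  refine ⟨N, fun n hn => ?_⟩
  have hnonneg : 0 ≤ normf (fun x => F n x - g x) := by
    rw [hnorm]
    refine Real.sSup_nonneg ?_
    rintro y ⟨x, hx, rfl⟩
    exact mul_nonneg (hge0 x) (abs_nonneg _)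
  have hub : normf (fun x => F n x - g x) ≤ ε / 2 := by
    rw [hnorm]
    refine Real.sSup_le ?_ (by linarith)
    rintro y ⟨x, hx, rfl⟩
    exact hN n hn x hx
  rw [Real.dist_eq, sub_zero, abs_of_nonneg hnonneg]
  linarith
end
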